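/- Let p be a prime, k an algebraically closed field of characteristic p, K the fraction field of W(k), and σ : K → K the automorphism induced by the Witt vector Frobenius. For integers m ≠ m', every K-linear map f : K → K satisfying f(p^m · σ(x)) = p^{m'} · σ(f(x)) for all x ∈ K is the zero map; that is, there are no nonzero morphisms between standard one-dimensional isocrystals of distinct integer slopes. -/

import Mathlib

open WittVector

/-- Auxiliary: in `W(k)`, `p^n * U ≠ p^(n+e) * V` when `U` is a unit and `e > 0`. -/
lemma aux_pow_p_ne (p : ℕ) [Fact p.Prime] {k : Type*} [Field k] [CharP k p]
    (n e : ℕ) (he : 0 < e) (U V : WittVector p k) (hU : U.coeff 0 ≠ 0) :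
    (p : WittVector p k) ^ n * U ≠ (p : WittVector p k) ^ (n + e) * V := by
  intro h
  have hp0 : (p : WittVector p k) ≠ 0 := WittVector.p_nonzero p k
  have h' : U = (p : WittVector p k) ^ e * V := by
    rw [pow_add, mul_assoc] at h
    exact mul_left_cancel₀ (pow_ne_zero n hp0) h
  have hdvd : (p : WittVector p k) ∣ U := by
    refine ⟨(p : WittVector p k) ^ (e - 1) * V, ?_⟩
    rw [h', ← mul_assoc, ← pow_succ']
    congr 2
    omega
  exact (WittVector.irreducible p).not_isUnit
    (isUnit_of_dvd_unit hdvd (WittVector.isUnit_of_coeff_zero_ne_zero U hU))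

/-- Auxiliary: no nonzero `c` in `Frac(W(k))` satisfies `σ c = p^d * c` with `d ≠ 0`. -/
lemma aux_no_eigen (p : ℕ) [Fact p.Prime] (k : Type*) [Field k] [IsAlgClosed k] [CharP k p]
    (d : ℤ) (hd : d ≠ 0) (c : FractionRing (WittVector p k)) (hc : c ≠ 0)
    (hceq : WittVector.FractionRing.frobenius p k c
      = (p : FractionRing (WittVector p k)) ^ d * c) : False := by
  have hpK : (p : FractionRing (WittVector p k)) ≠ 0 := WittVector.FractionRing.p_nonzero p k
  obtain ⟨r, q, hq, rfl⟩ := IsFractionRing.div_surjective (A := WittVector p k) c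
  set K := FractionRing (WittVector p k) with hK
  set A := algebraMap (WittVector p k) K with hA
  have hq0 : q ≠ 0 := nonZeroDivisors.ne_zero hq
  have hAq : A q ≠ 0 := by simp [hA, IsFractionRing.to_map_eq_zero_iff, hq0]
  have hr0 : r ≠ 0 := by
    rintro rfl
    simp at hc
  obtain ⟨a, r', hr', hrr⟩ := WittVector.exists_eq_pow_p_mul r hr0
  obtain ⟨b, q', hq', hqq⟩ := WittVector.exists_eq_pow_p_mul q hq0
  have hσA : ∀ x : WittVector p k,
      WittVector.FractionRing.frobenius p k (A x) = A (WittVector.frobenius x) := by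
    intro x
    exact
      IsFractionRing.ringEquivOfRingEquiv_algebraMap (frobeniusEquiv p k) x
  have hfq0 : WittVector.frobenius q ≠ 0 := by
    intro h
    apply hq0
    have h2 : frobeniusEquiv p k q = frobeniusEquiv p k 0 := by
      rw [map_zero]; simpa [WittVector.frobeniusEquiv_apply] using h
    exact (frobeniusEquiv p k).injective h2
  have hAfq : A (WittVector.frobenius q) ≠ 0 := by
    simp [hA, IsFractionRing.to_map_eq_zero_iff, hfq0]
  have h1 := hceq
  rw [map_div₀, hσA, hσA, mul_div_assoc'] at h1
  have key0 := (div_eq_div_iff hAfq hAq).mp h1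
  -- key0 : A (frobenius r) * A q = p ^ d * A r * A (frobenius q)
  have hfr : WittVector.frobenius r = (p : WittVector p k) ^ a * WittVector.frobenius r' := by
    rw [hrr, map_mul, map_pow, map_natCast]
  have hfq : WittVector.frobenius q = (p : WittVector p k) ^ b * WittVector.frobenius q' := by
    rw [hqq, map_mul, map_pow, map_natCast]
  set U : WittVector p k := WittVector.frobenius r' * q' with hU
  set V : WittVector p k := r' * WittVector.frobenius q' with hV
  have hUc : U.coeff 0 ≠ 0 := by
    rw [hU, WittVector.mul_coeff_zero, WittVector.coeff_frobenius_charP]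
    exact mul_ne_zero (pow_ne_zero _ hr') hq'
  have hVc : V.coeff 0 ≠ 0 := by
    rw [hV, WittVector.mul_coeff_zero, WittVector.coeff_frobenius_charP]
    exact mul_ne_zero hr' (pow_ne_zero _ hq')
  have key2 : A ((p : WittVector p k) ^ (a + b) * U)
      = (p : K) ^ d * A ((p : WittVector p k) ^ (a + b) * V) := by
    have e1 : WittVector.frobenius r * q = (p : WittVector p k) ^ (a + b) * U := by
      rw [hfr, hqq, hU, pow_add]; ring
    have e2 : r * WittVector.frobenius q = (p : WittVector p k) ^ (a + b) * V := by
      rw [hfq, hrr, hV, pow_add]; ring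
    rw [← e1, ← e2, map_mul, map_mul, key0]
    ring
  rcases lt_or_gt_of_ne hd with hdneg | hdpos
  · -- d < 0
    set e : ℕ := (-d).toNat with he
    have hdE : d = -(e : ℤ) := by omega
    have hpe : (p : K) ^ d = ((p : K) ^ e)⁻¹ := by
      rw [hdE, zpow_neg, zpow_natCast]
    have key3' : (p : K) ^ e * A ((p : WittVector p k) ^ (a + b) * U)
        = A ((p : WittVector p k) ^ (a + b) * V) := by
      rw [key2, hpe, ← mul_assoc, mul_inv_cancel₀ (pow_ne_zero e hpK), one_mul]
    have key3 : A ((p : WittVector p k) ^ ((a + b) + e) * U)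
        = A ((p : WittVector p k) ^ (a + b) * V) := by
      rw [← key3']
      simp only [map_mul, map_pow, map_natCast]
      ring
    exact aux_pow_p_ne p (a + b) e (by omega) V U hVc
      (IsFractionRing.injective (WittVector p k) K key3.symm)
  · -- d > 0
    set e : ℕ := d.toNat with he
    have hdE : d = (e : ℤ) := by omega
    have hpe : (p : K) ^ d = (p : K) ^ e := by rw [hdE, zpow_natCast]
    have key3 : A ((p : WittVector p k) ^ (a + b) * U)
        = A ((p : WittVector p k) ^ ((a + b) + e) * V) := by
      rw [key2, hpe]
      simp only [map_mul, map_pow, map_natCast]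
      ring
    exact aux_pow_p_ne p (a + b) e (by omega) U V hUc
      (IsFractionRing.injective (WittVector p k) K key3)

/-- Let `p` be a prime, `k` an algebraically closed field of
characteristic `p`, `K = Frac(W(k))`, and `σ : K → K` the automorphism induced by
the Witt vector Frobenius.  For integers `m ≠ m'`, every `K`-linear map
`f : K → K` satisfying `f (p^m * σ x) = p^m' * σ (f x)` for all `x ∈ K` is zero;
that is, there are no nonzero morphisms between standard one-dimensional
isocrystals of distinct integer slopes. -/
theorem no_nonzero_morphism_between_distinct_slopes
    (p : ℕ) [Fact p.Prime] (k : Type*) [Field k] [IsAlgClosed k] [CharP k p]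
    (m m' : ℤ) (hmm' : m ≠ m')
    (f : FractionRing (WittVector p k) →ₗ[FractionRing (WittVector p k)]
      FractionRing (WittVector p k))
    (hf : ∀ x : FractionRing (WittVector p k),
      f ((p : FractionRing (WittVector p k)) ^ m
          * WittVector.FractionRing.frobenius p k x)
        = (p : FractionRing (WittVector p k)) ^ m'
          * WittVector.FractionRing.frobenius p k (f x)) :
    f = 0 := by
  set K := FractionRing (WittVector p k) with hK
  have hpK : (p : K) ≠ 0 := WittVector.FractionRing.p_nonzero p k
  have hfx : ∀ x : K, f x = x * f 1 := by
    intro x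
    have : f (x • (1 : K)) = x • f 1 := f.map_smul x 1
    simpa [smul_eq_mul] using this
  by_cases hc0 : f 1 = 0
  · ext
    simpa using hc0
  · exfalso
    have h1 := hf 1
    rw [map_one, mul_one, hfx ((p : K) ^ m)] at h1
    -- h1 : p^m * f 1 = p^m' * σ (f 1)
    have hceq : WittVector.FractionRing.frobenius p k (f 1) = (p : K) ^ (m - m') * f 1 := by
      have h3 := congrArg (fun y => (p : K) ^ (-m') * y) h1.symm
      rw [← mul_assoc, ← zpow_add₀ hpK, neg_add_cancel, zpow_zero, one_mul, ← mul_assoc,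
        ← zpow_add₀ hpK, neg_add_eq_sub] at h3
      exact h3
    exact aux_no_eigen p k (m - m') (sub_ne_zero_of_ne hmm') (f 1) hc0 hceq
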